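/- Let X^n be the stationary geometric-sticky Markov chain with parameter α and base distribution p. For distinct x, y ∈ X and indices 2 ≤ m1, m1+1 = m2 ≤ n−1, the probability that X_{m1} = x, X_{m2} = y, and neither x nor y appears at any other index equals (1−α)³·p_x·p_y·(1−p_x−p_y)²·(1−(1−α)(p_x+p_y))^{n−4}. -/

import Mathlib

/-!
The probability of a path is `p x₀ * ∏ T (xᵢ, xᵢ₊₁)` for the sticky kernel
`T z w = α 1[w = z] + (1 - α) p w`, so the probability of the event is computed by transfer
operators restricted to the allowed sets. Write `q = 1 - p a - p b` and
`r = 1 - (1 - α) (p a + p b)`. Since the chain either stays put or refreshes from `p`, the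
forward step restricted to `{a, b}ᶜ` maps `p` to a vector agreeing with `r • p` on `{a, b}ᶜ`,
which is therefore an eigenvector of that step with eigenvalue `r`; the same holds for the
backward step and the constant `1`. The `n - 4` forbidden positions other than the first and the
last thus contribute `r ^ (n - 4)`, and the remaining factors are `(1 - α) p a q` (entering `a`),
`T a b = (1 - α) p b` and `(1 - α) q` (leaving `b`).
-/

open scoped Classical

/-- The probability that the stationary geometric-sticky Markov chain with stickiness
parameter `α` and base distribution `p` (i.e. `X_1 ~ p` and
`Pr(X_i = z | X_{i-1} = y) = α·1[z=y] + (1-α)·p z`) produces the sample path `x`. -/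
noncomputable def stickyProb {X : Type*} [DecidableEq X] (α : ℝ) (p : X → ℝ) {n : ℕ}
    (x : Fin n → X) : ℝ :=
  (if h : 0 < n then p (x ⟨0, h⟩) else 1) *
  ∏ i : Fin n, if i.val = 0 then 1 else
    ((if x i = x ⟨i.val - 1, lt_of_le_of_lt (Nat.pred_le _) i.isLt⟩ then α else 0)
      + (1 - α) * p (x i))

lemma sum_pi_fin_succ_cons {X M : Type*} [Fintype X] [AddCommMonoid M] {n : ℕ}
    (f : (Fin (n + 1) → X) → M) :
    ∑ x, f x = ∑ z, ∑ y : Fin n → X, f (Fin.cons z y) := by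
  rw [← (Fin.consEquiv fun _ ↦ X).sum_comp, Fintype.sum_prod_type]
  rfl

lemma sum_pi_fin_succ_snoc {X M : Type*} [Fintype X] [AddCommMonoid M] {n : ℕ}
    (f : (Fin (n + 1) → X) → M) :
    ∑ x, f x = ∑ z, ∑ y : Fin n → X, f (Fin.snoc y z) := by
  rw [← (Fin.snocEquiv fun _ ↦ X).sum_comp, Fintype.sum_prod_type]
  rfl

noncomputable section PathSums

variable {X : Type*}

def pathProd (T : X → X → ℝ) {n : ℕ} (x : Fin (n + 1) → X) : ℝ :=
  ∏ i : Fin n, T (x i.castSucc) (x i.succ)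

lemma pathProd_cons (T : X → X → ℝ) {n : ℕ} (z : X) (x : Fin (n + 1) → X) :
    pathProd T (Fin.cons z x : Fin (n + 2) → X) = T z (x 0) * pathProd T x := by
  rw [pathProd, Fin.prod_univ_succ]
  rfl

lemma pathProd_snoc (T : X → X → ℝ) {n : ℕ} (x : Fin (n + 1) → X) (z : X) :
    pathProd T (Fin.snoc x z : Fin (n + 2) → X) = pathProd T x * T (x (Fin.last n)) z := by
  rw [pathProd, Fin.prod_univ_castSucc]
  simp only [Fin.succ_last, Fin.snoc_last, Fin.succ_castSucc, Fin.snoc_castSucc]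
  rfl

variable [Fintype X]

/-- Paths have `n + 1` positions; the constraints `S` are indexed by `ℕ` so that removing the
last position leaves them unchanged. -/
def constrainedPathSum (T : X → X → ℝ) (S : ℕ → Set X) (n : ℕ) (μ ν : X → ℝ) : ℝ :=
  ∑ x : Fin (n + 1) → X,
    if ∀ i, x i ∈ S i.val then μ (x 0) * pathProd T x * ν (x (Fin.last n)) else 0

def forwardStep (T : X → X → ℝ) (s : Set X) (μ : X → ℝ) (w : X) : ℝ :=
  ∑ z, s.indicator μ z * T z w

def backwardStep (T : X → X → ℝ) (s : Set X) (ν : X → ℝ) (z : X) : ℝ :=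
  ∑ w, T z w * s.indicator ν w

variable (T : X → X → ℝ) (S : ℕ → Set X)

lemma constrainedPathSum_succ_eq_forwardStep (n : ℕ) (μ ν : X → ℝ) :
    constrainedPathSum T S (n + 1) μ ν
      = constrainedPathSum T (fun i ↦ S (i + 1)) n (forwardStep T (S 0) μ) ν := by
  rw [constrainedPathSum, sum_pi_fin_succ_cons, Finset.sum_comm]
  refine Finset.sum_congr rfl fun y _ ↦ ?_
  have hmem : ∀ z, (∀ i : Fin (n + 2), (Fin.cons z y : Fin (n + 2) → X) i ∈ S i) ↔
      z ∈ S 0 ∧ ∀ i : Fin (n + 1), y i ∈ S (i + 1) := fun z ↦ Fin.forall_fin_succ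
  simp only [hmem, pathProd_cons, Fin.cons_zero, Fin.cons_last]
  split_ifs with hy
  · simp only [hy, forwardStep, Finset.sum_mul]
    refine Finset.sum_congr rfl fun z _ ↦ ?_
    by_cases hz : z ∈ S 0 <;> simp [hz, mul_assoc]
  · simp [hy]

lemma constrainedPathSum_succ_eq_backwardStep (n : ℕ) (μ ν : X → ℝ) :
    constrainedPathSum T S (n + 1) μ ν
      = constrainedPathSum T S n μ (backwardStep T (S (n + 1)) ν) := by
  rw [constrainedPathSum, sum_pi_fin_succ_snoc, Finset.sum_comm]
  refine Finset.sum_congr rfl fun y _ ↦ ?_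
  have hmem : ∀ z, (∀ i : Fin (n + 2), (Fin.snoc y z : Fin (n + 2) → X) i ∈ S i) ↔
      (∀ i : Fin (n + 1), y i ∈ S i) ∧ z ∈ S (n + 1) := fun z ↦ by
    simp [Fin.forall_fin_succ']
  simp only [hmem, pathProd_snoc, Fin.snoc_last]
  split_ifs with hy
  · simp only [hy, backwardStep, Finset.mul_sum]
    refine Finset.sum_congr rfl fun z _ ↦ ?_
    by_cases hz : z ∈ S (n + 1) <;> simp [hz, mul_assoc]
  · simp [hy]

lemma constrainedPathSum_one_of_singleton {a b : X} (h0 : S 0 = {a}) (h1 : S 1 = {b})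
    (μ ν : X → ℝ) : constrainedPathSum T S 1 μ ν = μ a * T a b * ν b := by
  rw [constrainedPathSum_succ_eq_forwardStep, constrainedPathSum, h0, sum_pi_fin_succ_cons]
  simp [h1, Fin.forall_fin_one, pathProd, forwardStep, Set.indicator_apply]

lemma constrainedPathSum_smul_left (n : ℕ) (c : ℝ) (μ ν : X → ℝ) :
    constrainedPathSum T S n (c • μ) ν = c * constrainedPathSum T S n μ ν := by
  simp only [constrainedPathSum, Finset.mul_sum, Pi.smul_apply, smul_eq_mul, mul_ite, mul_zero,
    mul_assoc]

lemma constrainedPathSum_smul_right (n : ℕ) (c : ℝ) (μ ν : X → ℝ) :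
    constrainedPathSum T S n μ (c • ν) = c * constrainedPathSum T S n μ ν := by
  simp only [constrainedPathSum, Finset.mul_sum, Pi.smul_apply, smul_eq_mul, mul_ite, mul_zero]
  congr! 2
  ring

variable {T}

lemma forwardStep_eq_smul_of_indicator_eq {s : Set X} {μ μ' : X → ℝ} {c : ℝ}
    (h : s.indicator μ' = c • s.indicator μ) : forwardStep T s μ' = c • forwardStep T s μ := by
  ext w
  simp [forwardStep, h, Finset.mul_sum, mul_assoc]

lemma backwardStep_eq_smul_of_indicator_eq {s : Set X} {ν ν' : X → ℝ} {c : ℝ}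
    (h : s.indicator ν' = c • s.indicator ν) : backwardStep T s ν' = c • backwardStep T s ν := by
  ext z
  simp only [backwardStep, h, Finset.mul_sum, Pi.smul_apply, smul_eq_mul]
  congr! 1
  ring

lemma constrainedPathSum_add_of_forwardStep_eq_smul {s : Set X} {c : ℝ} {μ : X → ℝ}
    (hμ : forwardStep T s μ = c • μ) (n j : ℕ) (hS : ∀ i < j, S i = s) (ν : X → ℝ) :
    constrainedPathSum T S (n + j) μ ν
      = c ^ j * constrainedPathSum T (fun i ↦ S (i + j)) n μ ν := by
  induction j generalizing S with
  | zero => simp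
  | succ j ih =>
    rw [← add_assoc, constrainedPathSum_succ_eq_forwardStep, hS 0 (by omega), hμ,
      constrainedPathSum_smul_left, ih _ fun i hi ↦ hS (i + 1) (by omega), pow_succ', mul_assoc]
    rfl

lemma constrainedPathSum_add_of_backwardStep_eq_smul {s : Set X} {c : ℝ} {ν : X → ℝ}
    (hν : backwardStep T s ν = c • ν) (n j : ℕ) (hS : ∀ i, n < i → i ≤ n + j → S i = s)
    (μ : X → ℝ) :
    constrainedPathSum T S (n + j) μ ν = c ^ j * constrainedPathSum T S n μ ν := by
  induction j with
  | zero => simp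
  | succ j ih =>
    rw [← add_assoc, constrainedPathSum_succ_eq_backwardStep,
      hS (n + j + 1) (by omega) (by omega), hν, constrainedPathSum_smul_right,
      ih fun i hi hi' ↦ hS i hi (by omega), pow_succ', mul_assoc]

end PathSums

noncomputable section StickyChain

variable {X : Type*} [DecidableEq X]

def stickyKernel (α : ℝ) (p : X → ℝ) (z w : X) : ℝ :=
  (if w = z then α else 0) + (1 - α) * p w

lemma stickyProb_eq_mul_pathProd (α : ℝ) (p : X → ℝ) {n : ℕ} (x : Fin (n + 1) → X) :
    stickyProb α p x = p (x 0) * pathProd (stickyKernel α p) x := by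
  rw [stickyProb, dif_pos n.succ_pos, Fin.prod_univ_succ, pathProd]
  simp only [Fin.val_zero, if_true, one_mul, Fin.val_succ, add_tsub_cancel_right,
    Nat.succ_ne_zero, if_false]
  rfl

variable [Fintype X] (α : ℝ) (p : X → ℝ)

lemma forwardStep_stickyKernel (s : Set X) (μ : X → ℝ) (w : X) :
    forwardStep (stickyKernel α p) s μ w
      = α * s.indicator μ w + (1 - α) * p w * ∑ z, s.indicator μ z := by
  simp only [forwardStep, stickyKernel, mul_add, Finset.sum_add_distrib, mul_ite, mul_zero,
    Finset.sum_ite_eq, Finset.mem_univ, if_true, ← Finset.sum_mul]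
  ring

lemma backwardStep_stickyKernel (s : Set X) (ν : X → ℝ) (z : X) :
    backwardStep (stickyKernel α p) s ν z
      = α * s.indicator ν z + (1 - α) * ∑ w, s.indicator (fun w ↦ p w * ν w) w := by
  simp [backwardStep, stickyKernel, add_mul, Finset.sum_add_distrib, Finset.mul_sum, mul_assoc,
    Set.indicator_mul_right]

variable {p} {a b : X}

lemma sum_indicator_compl_pair (hsum : ∑ z, p z = 1) (hab : a ≠ b) :
    ∑ z, ({a, b}ᶜ : Set X).indicator p z = 1 - p a - p b := by
  rw [Set.indicator_compl, ← Finset.coe_pair]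
  simp only [Pi.sub_apply, Finset.sum_sub_distrib, hsum,
    Finset.sum_indicator_subset _ (Finset.subset_univ _), Finset.sum_pair hab]
  ring

lemma indicator_forwardStep_stickyKernel_compl_pair (hsum : ∑ z, p z = 1) (hab : a ≠ b) :
    ({a, b}ᶜ : Set X).indicator (forwardStep (stickyKernel α p) {a, b}ᶜ p)
      = (1 - (1 - α) * (p a + p b)) • ({a, b}ᶜ : Set X).indicator p := by
  ext w
  by_cases hw : w ∈ ({a, b}ᶜ : Set X)
  · simp only [Set.indicator_of_mem hw, forwardStep_stickyKernel, Pi.smul_apply, smul_eq_mul,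
      sum_indicator_compl_pair hsum hab]
    ring
  · simp [Set.indicator_of_notMem hw]

lemma forwardStep_stickyKernel_compl_pair_left (hsum : ∑ z, p z = 1) (hab : a ≠ b) :
    forwardStep (stickyKernel α p) {a, b}ᶜ p a = (1 - α) * p a * (1 - p a - p b) := by
  simp [forwardStep_stickyKernel, sum_indicator_compl_pair hsum hab]

lemma indicator_backwardStep_stickyKernel_compl_pair (hsum : ∑ z, p z = 1) (hab : a ≠ b) :
    ({a, b}ᶜ : Set X).indicator (backwardStep (stickyKernel α p) {a, b}ᶜ 1)
      = (1 - (1 - α) * (p a + p b)) • ({a, b}ᶜ : Set X).indicator 1 := by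
  ext z
  by_cases hz : z ∈ ({a, b}ᶜ : Set X)
  · simp only [Set.indicator_of_mem hz, backwardStep_stickyKernel, Pi.smul_apply, smul_eq_mul,
      Pi.one_apply, mul_one, sum_indicator_compl_pair hsum hab]
    ring
  · simp [Set.indicator_of_notMem hz]

lemma backwardStep_stickyKernel_compl_pair_right (hsum : ∑ z, p z = 1) (hab : a ≠ b) :
    backwardStep (stickyKernel α p) {a, b}ᶜ 1 b = (1 - α) * (1 - p a - p b) := by
  simp [backwardStep_stickyKernel, sum_indicator_compl_pair hsum hab]

end StickyChain

def pairPattern {X : Type*} (j : ℕ) (a b : X) (i : ℕ) : Set X :=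
  if i = j then {a} else if i = j + 1 then {b} else {a, b}ᶜ

lemma forall_mem_pairPattern_iff {X : Type*} {n j : ℕ} (hj : j + 1 < n) (a b : X)
    (x : Fin n → X) :
    (∀ i : Fin n, x i ∈ pairPattern j a b i) ↔
      x ⟨j, by omega⟩ = a ∧ x ⟨j + 1, hj⟩ = b ∧
        ∀ i : Fin n, i.val ≠ j → i.val ≠ j + 1 → x i ≠ a ∧ x i ≠ b := by
  constructor
  · intro h
    refine ⟨by simpa [pairPattern] using h ⟨j, by omega⟩,
      by simpa [pairPattern] using h ⟨j + 1, hj⟩, fun i hi hi' ↦ ?_⟩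
    simpa [pairPattern, hi, hi', not_or] using h i
  · rintro ⟨ha, hb, hother⟩ i
    unfold pairPattern
    split_ifs with h1 h2
    · exact (congrArg x (Fin.ext h1)).trans ha
    · exact (congrArg x (Fin.ext h2)).trans hb
    · simpa [not_or] using hother i h1 h2

theorem sticky_prob_two_singletons_consecutive
    {X : Type*} [Fintype X] [DecidableEq X] (α : ℝ)
    (p : X → ℝ) (hsum : ∑ z, p z = 1)
    (n : ℕ) (hn : 4 ≤ n) (m1 : ℕ) (hm1 : 2 ≤ m1) (hm2 : m1 + 1 ≤ n - 1)
    (a b : X) (hab : a ≠ b) :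
    ∑ x : Fin n → X,
        (if x ⟨m1 - 1, by omega⟩ = a ∧ x ⟨m1, by omega⟩ = b ∧
            (∀ i : Fin n, i.val ≠ m1 - 1 → i.val ≠ m1 → x i ≠ a ∧ x i ≠ b)
          then stickyProb α p x else 0)
      = (1 - α) ^ 3 * p a * p b * (1 - p a - p b) ^ 2
          * (1 - (1 - α) * (p a + p b)) ^ (n - 4) := by
  obtain ⟨k, rfl⟩ : ∃ k, m1 = k + 2 := ⟨m1 - 2, by omega⟩
  obtain ⟨l, rfl⟩ : ∃ l, n = k + l + 4 := ⟨n - k - 4, by omega⟩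
  set S := pairPattern (k + 1) a b
  have hG : ∀ i, i ≠ k + 1 → i ≠ k + 2 → S i = {a, b}ᶜ := fun i h1 h2 ↦ by
    simp [S, pairPattern, h1, h2]
  have hfwd := forwardStep_eq_smul_of_indicator_eq (T := stickyKernel α p)
    (indicator_forwardStep_stickyKernel_compl_pair α hsum hab)
  have hbwd := backwardStep_eq_smul_of_indicator_eq (T := stickyKernel α p)
    (indicator_backwardStep_stickyKernel_compl_pair α hsum hab)
  calc _ = constrainedPathSum (stickyKernel α p) S (k + l + 3) p 1 :=
        Finset.sum_congr rfl fun x _ ↦ if_congr (forall_mem_pairPattern_iff (by omega) a b x).symm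
          (by rw [stickyProb_eq_mul_pathProd, Pi.one_apply, mul_one]) rfl
    _ = _ := by
      rw [show k + l + 3 = l + 2 + k + 1 by omega, constrainedPathSum_succ_eq_forwardStep,
        hG 0 (by omega) (by omega),
        constrainedPathSum_add_of_forwardStep_eq_smul _ hfwd _ _
          fun i _ ↦ hG _ (by omega) (by omega)]
      rw [show l + 2 = 1 + l + 1 by omega, constrainedPathSum_succ_eq_backwardStep,
        hG _ (by omega) (by omega),
        constrainedPathSum_add_of_backwardStep_eq_smul _ hbwd _ _
          fun i _ _ ↦ hG _ (by omega) (by omega)]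
      rw [constrainedPathSum_one_of_singleton (a := a) (b := b) _ _
          (by simp [S, pairPattern]) (by simp [S, pairPattern, add_comm]),
        forwardStep_stickyKernel_compl_pair_left α hsum hab,
        backwardStep_stickyKernel_compl_pair_right α hsum hab]
      simp [stickyKernel, hab.symm]
      ring
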